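/- arXiv:2309.00603 — 3 statements merged into one kernel-verified Lean document; each statement's English description precedes it below -/
import Mathlib

section
/- Let Ω ⊂ ℂ be a simply connected open set, star-shaped around 0 but not containing 0, and let p, q be holomorphic on Ω with p nowhere zero on Ω. Define f₀(a) = (1/p(a)) exp(−∫_b^a (q/p) dζ) for a fixed base point b ∈ Ω. Suppose there exist τ > 0, δ > 0, C ≥ 0 such that |q(ζ)/p(ζ) + τ/ζ| < C whenever ζ ∈ Ω, |ζ| < δ. Then lim_{ζ→0, ζ∈Ω} exp(−∫_b^ζ (q/p)) = 0, and consequently f₀ satisfies f₀(a) = −(1/p(a)) ∫_{ζ=0}^a q(ζ) f₀(ζ) dζ for all a ∈ Ω, where the integral is an improper integral along a path from 0 to a inside Ω. -/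
/-!
Put `ψ z = Re F z + τ log |z|`. On `Ω ∩ B(0, δ)` its derivative along a direction `v` is
`Re ((q/p + τ/z) v)`, so `ψ` is `C`-Lipschitz along every segment there. Contracting a segment of
`Ω` by a factor `t → 0` puts it inside `B(0, δ)` and shrinks its length to `0`, hence
`ψ (t z) - ψ (t z₀) → 0` for neighbouring `z, z₀ ∈ Ω`, and then, `Ω` being connected, for all of
them. Comparing `z₀ → t z₀ → t z → z` bounds `ψ` from below on `Ω ∩ B(0, δ)`, which gives
`|exp (-(F z - F b))| ≲ |z| ^ τ → 0`. The integral identity is the fundamental theorem of calculus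
along the ray `t ↦ t a`, with this limit at the end `t = 0`.
-/

open Complex Set Filter Topology Metric

section Radial

variable {E : Type*} [NormedAddCommGroup E] [NormedSpace ℝ E] {U : Set E} {δ C : ℝ} {ψ : E → ℝ}

lemma smul_mem_inter_ball (hU : ∀ a ∈ U, ∀ t ∈ Ioc (0:ℝ) 1, t • a ∈ U) {z : E}
    (hz : z ∈ U ∩ ball 0 δ) {t : ℝ} (ht : t ∈ Ioc (0:ℝ) 1) : t • z ∈ U ∩ ball 0 δ := by
  refine ⟨hU z hz.1 t ht, ?_⟩
  rw [mem_ball_zero_iff, norm_smul, Real.norm_of_nonneg ht.1.le]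
  nlinarith [norm_nonneg z, mem_ball_zero_iff.mp hz.2, ht.2]

lemma segment_smul_self_subset {V : Set E} (hV : ∀ a ∈ V, ∀ t ∈ Ioc (0:ℝ) 1, t • a ∈ V)
    {z : E} (hz : z ∈ V) {t : ℝ} (ht : t ∈ Ioc (0:ℝ) 1) : segment ℝ (t • z) z ⊆ V := by
  rintro _ ⟨a, b, ha, hb, hab, rfl⟩
  rw [smul_smul, ← add_smul]
  exact hV z hz _ ⟨by nlinarith [mul_nonneg hb (sub_nonneg.2 ht.2), ht.1],
    by nlinarith [mul_nonneg ha (sub_nonneg.2 ht.2)]⟩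

lemma tendsto_sub_comp_smul_of_segment_subset (hU : ∀ a ∈ U, ∀ t ∈ Ioc (0:ℝ) 1, t • a ∈ U)
    (hψ : ∀ w w', segment ℝ w w' ⊆ U ∩ ball 0 δ → |ψ w' - ψ w| ≤ C * ‖w' - w‖)
    (hδ : 0 < δ) {z₀ z : E} (hseg : segment ℝ z₀ z ⊆ U) :
    Tendsto (fun t : ℝ => ψ (t • z) - ψ (t • z₀)) (𝓝[>] 0) (𝓝 0) := by
  set R := max ‖z₀‖ ‖z‖
  have hsmall : ∀ᶠ t in 𝓝[>] (0:ℝ), t ∈ Ioc 0 1 ∧ t * R < δ := by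
    have hR : 0 < δ / (R + 1) := div_pos hδ (by positivity)
    filter_upwards [Ioo_mem_nhdsGT (lt_min one_pos hR)] with t ht
    refine ⟨⟨ht.1, (ht.2.trans_le (min_le_left _ _)).le⟩, ?_⟩
    have := (lt_div_iff₀ (by positivity : (0:ℝ) < R + 1)).mp (ht.2.trans_le (min_le_right _ _))
    nlinarith [ht.1, le_max_left ‖z₀‖ ‖z‖]
  have hlength : Tendsto (fun t : ℝ => C * ‖t • z - t • z₀‖) (𝓝[>] 0) (𝓝 0) := by
    have : Continuous fun t : ℝ => C * ‖t • z - t • z₀‖ := by fun_prop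
    exact (this.tendsto' 0 0 (by simp)).mono_left nhdsWithin_le_nhds
  refine squeeze_zero_norm' ?_ hlength
  filter_upwards [hsmall] with t ⟨ht, htR⟩
  refine hψ _ _ ?_
  rintro _ ⟨a, b, ha, hb, hab, rfl⟩
  have hx : a • z₀ + b • z ∈ segment ℝ z₀ z := ⟨a, b, ha, hb, hab, rfl⟩
  have hxR : ‖a • z₀ + b • z‖ ≤ R :=
    mem_closedBall_zero_iff.mp <| (convex_closedBall (0:E) R).segment_subset
      (mem_closedBall_zero_iff.mpr (le_max_left _ _))
      (mem_closedBall_zero_iff.mpr (le_max_right _ _)) hx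
  rw [smul_comm a t, smul_comm b t, ← smul_add]
  refine ⟨hU _ (hseg hx) t ht, ?_⟩
  rw [mem_ball_zero_iff, norm_smul, Real.norm_of_nonneg ht.1.le]
  nlinarith [ht.1]

lemma tendsto_sub_comp_smul (hU : ∀ a ∈ U, ∀ t ∈ Ioc (0:ℝ) 1, t • a ∈ U)
    (hψ : ∀ w w', segment ℝ w w' ⊆ U ∩ ball 0 δ → |ψ w' - ψ w| ≤ C * ‖w' - w‖)
    (hUo : IsOpen U) (hUc : IsPreconnected U) (hδ : 0 < δ)
    {z₀ z : E} (hz₀ : z₀ ∈ U) (hz : z ∈ U) :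
    Tendsto (fun t : ℝ => ψ (t • z) - ψ (t • z₀)) (𝓝[>] 0) (𝓝 0) := by
  refine hUc.induction₂ (fun z₀ z => Tendsto (fun t : ℝ => ψ (t • z) - ψ (t • z₀)) (𝓝[>] 0) (𝓝 0))
    (fun x hx => ?_) (fun x y w _ _ _ hxy hyw => ?_) (fun x y _ _ hxy => ?_) hz₀ hz
  · obtain ⟨r, hr, hball⟩ := isOpen_iff.mp hUo x hx
    filter_upwards [nhdsWithin_le_nhds (ball_mem_nhds x hr)] with y hy
    exact tendsto_sub_comp_smul_of_segment_subset hU hψ hδ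
      ((convex_ball x r).segment_subset (mem_ball_self hr) hy |>.trans hball)
  · simpa using hxy.add hyw
  · simpa using hxy.neg

lemma sub_le_of_segment_lipschitz (hU : ∀ a ∈ U, ∀ t ∈ Ioc (0:ℝ) 1, t • a ∈ U)
    (hψ : ∀ w w', segment ℝ w w' ⊆ U ∩ ball 0 δ → |ψ w' - ψ w| ≤ C * ‖w' - w‖)
    (hUo : IsOpen U) (hUc : IsPreconnected U) (hδ : 0 < δ)
    {z₀ z : E} (hz₀ : z₀ ∈ U ∩ ball 0 δ) (hz : z ∈ U ∩ ball 0 δ) :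
    ψ z₀ - ψ z ≤ C * (‖z₀‖ + ‖z‖) := by
  have hradial : ∀ w ∈ U ∩ ball 0 δ, ∀ t ∈ Ioc (0:ℝ) 1, |ψ w - ψ (t • w)| ≤ C * ‖w - t • w‖ :=
    fun w hw t ht => hψ _ _ <|
      segment_smul_self_subset (fun _ ha _ hs => smul_mem_inter_ball hU ha hs) hw ht
  have hcont : Continuous fun t : ℝ => C * ‖z₀ - t • z₀‖ + C * ‖z - t • z‖ := by fun_prop
  have hlim := ((hcont.tendsto' 0 (C * ‖z₀‖ + C * ‖z‖) (by simp)).mono_left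
    nhdsWithin_le_nhds).add (tendsto_sub_comp_smul hU hψ hUo hUc hδ hz.1 hz₀.1)
  rw [add_zero, ← mul_add] at hlim
  refine ge_of_tendsto hlim ?_
  filter_upwards [Ioc_mem_nhdsGT one_pos] with t ht
  have h₀ := abs_le.mp (hradial z₀ hz₀ t ht)
  have h₁ := abs_le.mp (hradial z hz t ht)
  linarith [h₀.2, h₁.1]

end Radial

lemma hasDerivAt_log_norm {γ : ℝ → ℂ} {v : ℂ} {u : ℝ} (hγ : HasDerivAt γ v u) (h0 : γ u ≠ 0) :
    HasDerivAt (fun x => Real.log ‖γ x‖) (v / γ u).re u := by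
  have hsq : HasDerivAt (fun x => Real.log (‖γ x‖ ^ 2)) (2 * inner ℝ (γ u) v / ‖γ u‖ ^ 2) u :=
    hγ.norm_sq.log (by positivity)
  have hhalf : (fun x => Real.log ‖γ x‖) = fun x => 1 / 2 * Real.log (‖γ x‖ ^ 2) := by
    ext x; rw [Real.log_pow]; push_cast; ring
  rw [hhalf]
  refine (hsq.const_mul _).congr_deriv ?_
  rw [Complex.inner, div_re, Complex.sq_norm]
  simp only [conj_re, conj_im, mul_re]
  field_simp
  ring

/-- `log |z ^ τ * exp (F z)|`, which needs no branch of `z ^ τ`. -/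
noncomputable def logWeight (F : ℂ → ℂ) (τ : ℝ) (z : ℂ) : ℝ := (F z).re + τ * Real.log ‖z‖

lemma hasDerivAt_logWeight_comp {F : ℂ → ℂ} {F' : ℂ} {τ : ℝ} {γ : ℝ → ℂ} {v : ℂ} {u : ℝ}
    (hγ : HasDerivAt γ v u) (hF : HasDerivAt F F' (γ u)) (h0 : γ u ≠ 0) :
    HasDerivAt (fun x => logWeight F τ (γ x)) (((F' + τ / γ u) * v).re) u := by
  have hre : HasDerivAt (fun x => (F (γ x)).re) (F' * v).re u :=
    reCLM.hasFDerivAt.comp_hasDerivAt u (hF.comp u hγ)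
  refine (hre.add ((hasDerivAt_log_norm hγ h0).const_mul τ)).congr_deriv ?_
  rw [add_mul, add_re, div_mul_eq_mul_div, mul_div_assoc, re_ofReal_mul]

lemma abs_logWeight_sub_le {S : Set ℂ} {F φ : ℂ → ℂ} {τ C : ℝ}
    (hF : ∀ z ∈ S, HasDerivAt F (φ z) z) (h0 : (0:ℂ) ∉ S) (hC : ∀ z ∈ S, ‖φ z + τ / z‖ ≤ C)
    {w w' : ℂ} (hseg : segment ℝ w w' ⊆ S) :
    |logWeight F τ w' - logWeight F τ w| ≤ C * ‖w' - w‖ := by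
  set γ : ℝ → ℂ := fun x => w + x * (w' - w)
  have hγS : ∀ x ∈ Icc (0:ℝ) 1, γ x ∈ S := fun x hx =>
    hseg <| segment_eq_image' ℝ w w' ▸ ⟨x, hx, by simp [γ, real_smul]⟩
  have hγ (x : ℝ) : HasDerivAt γ (w' - w) x :=
    (((hasDerivAt_id x).ofReal_comp.mul_const _).const_add w).congr_deriv (by simp)
  have h := norm_image_sub_le_of_norm_deriv_le_segment_01' (f := fun x => logWeight F τ (γ x))
    (C := C * ‖w' - w‖)
    (fun x hx => (hasDerivAt_logWeight_comp (hγ x) (hF _ (hγS x hx))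
      (fun h => h0 (h ▸ hγS x hx))).hasDerivWithinAt)
    (fun x hx => (abs_re_le_norm _).trans <| (norm_mul _ _).trans_le <|
      mul_le_mul_of_nonneg_right (hC _ (hγS x (Ico_subset_Icc_self hx))) (norm_nonneg _))
  simpa [γ] using h

lemma tendsto_exp_neg_sub_nhdsWithin_zero {Ω : Set ℂ} (hΩ : IsOpen Ω) (hΩc : IsPreconnected Ω)
    (hstar : ∀ a ∈ Ω, ∀ t ∈ Ioc (0:ℝ) 1, (t : ℂ) * a ∈ Ω) (h0 : (0:ℂ) ∉ Ω)
    (htouch : (0:ℂ) ∈ closure Ω) {F φ : ℂ → ℂ} (hF : ∀ z ∈ Ω, HasDerivAt F (φ z) z)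
    {τ δ C : ℝ} (hτ : 0 < τ) (hδ : 0 < δ) (hbound : ∀ z ∈ Ω, ‖z‖ < δ → ‖φ z + τ / z‖ < C)
    (b : ℂ) : Tendsto (fun z => exp (-(F z - F b))) (𝓝[Ω] 0) (𝓝 0) := by
  set S := Ω ∩ ball 0 δ
  have hψ : ∀ w w', segment ℝ w w' ⊆ S →
      |logWeight F τ w' - logWeight F τ w| ≤ C * ‖w' - w‖ :=
    fun w w' => abs_logWeight_sub_le (fun z hz => hF z hz.1) (fun h => h0 h.1)
      (fun z hz => (hbound z hz.1 (mem_ball_zero_iff.mp hz.2)).le)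
  obtain ⟨z₀, hz₀Ω, hz₀δ⟩ := mem_closure_iff.mp htouch δ hδ
  have hz₀ : z₀ ∈ S := ⟨hz₀Ω, mem_ball_comm.mp hz₀δ⟩
  have hstar' : ∀ a ∈ Ω, ∀ t ∈ Ioc (0:ℝ) 1, t • a ∈ Ω := by simpa only [real_smul] using hstar
  set k : ℂ → ℝ := fun z =>
    Real.exp ((F b).re - logWeight F τ z₀ + C * (‖z₀‖ + ‖z‖)) * ‖z‖ ^ τ
  have hk : ∀ z ∈ S, ‖exp (-(F z - F b))‖ ≤ k z := by
    intro z hz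
    dsimp only [k]
    have hzpos : 0 < ‖z‖ := norm_pos_iff.mpr fun h => h0 (h ▸ hz.1)
    have hlow := sub_le_of_segment_lipschitz hstar' hψ hΩ hΩc hδ hz₀ hz
    rw [norm_exp, Real.rpow_def_of_pos hzpos, ← Real.exp_add]
    refine Real.exp_le_exp.mpr ?_
    simp only [logWeight, neg_sub, sub_re] at hlow ⊢
    linarith
  have hk0 : Tendsto k (𝓝 0) (𝓝 0) := by
    have : Continuous k := by
      have := Real.continuous_rpow_const hτ.le
      fun_prop
    simpa [k, Real.zero_rpow hτ.ne'] using this.tendsto 0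
  refine squeeze_zero_norm' ?_ (hk0.mono_left nhdsWithin_le_nhds)
  filter_upwards [inter_mem_nhdsWithin Ω (ball_mem_nhds 0 hδ)] with z hz
  exact hk z hz

lemma tendsto_integral_ray {Ω : Set ℂ} (hstar : ∀ a ∈ Ω, ∀ t ∈ Ioc (0:ℝ) 1, (t : ℂ) * a ∈ Ω)
    {G g : ℂ → ℂ} (hG : ∀ z ∈ Ω, HasDerivAt G (g z) z) (hg : ContinuousOn g Ω)
    (hG0 : Tendsto G (𝓝[Ω] 0) (𝓝 0)) {a : ℂ} (ha : a ∈ Ω) :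
    Tendsto (fun ε : ℝ => ∫ t in ε..1, g (t * a) * a) (𝓝[>] 0) (𝓝 (G a)) := by
  have hftc : ∀ ε ∈ Ioc (0:ℝ) 1, ∫ t in ε..1, g (t * a) * a = G a - G (ε * a) := by
    intro ε hε
    have hray : MapsTo (fun t : ℝ => (t : ℂ) * a) (uIcc ε 1) Ω := fun t ht => by
      rw [uIcc_of_le hε.2] at ht
      exact hstar a ha t ⟨hε.1.trans_le ht.1, ht.2⟩
    have hderiv : ∀ t ∈ uIcc ε 1, HasDerivAt (fun t : ℝ => G (t * a)) (g (t * a) * a) t :=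
      fun t ht => (hG _ (hray ht)).comp t
        (((hasDerivAt_id t).ofReal_comp.mul_const a).congr_deriv (by simp))
    have hcont : ContinuousOn (fun t : ℝ => g (t * a) * a) (uIcc ε 1) :=
      (hg.comp (by fun_prop) hray).mul continuousOn_const
    simpa using intervalIntegral.integral_eq_sub_of_hasDerivAt hderiv hcont.intervalIntegrable
  have hray0 : Tendsto (fun ε : ℝ => (ε : ℂ) * a) (𝓝[>] 0) (𝓝[Ω] 0) := by
    refine tendsto_nhdsWithin_iff.mpr ⟨?_, ?_⟩
    · exact ((continuous_ofReal.mul continuous_const).tendsto' 0 0 (by simp)).mono_left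
        nhdsWithin_le_nhds
    · filter_upwards [Ioc_mem_nhdsGT one_pos] with ε hε using hstar a ha ε hε
  have hlim := (tendsto_const_nhds (x := G a)).sub (hG0.comp hray0)
  rw [sub_zero] at hlim
  refine hlim.congr' ?_
  filter_upwards [Ioc_mem_nhdsGT one_pos] with ε hε using (hftc ε hε).symm

theorem stmt4_general (Ω : Set ℂ) (hΩ : IsOpen Ω) (hsc : SimplyConnectedSpace Ω)
    (hstar : ∀ a ∈ Ω, ∀ t : ℝ, t ∈ Set.Ioc (0:ℝ) 1 → (t : ℂ) * a ∈ Ω)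
    (h0 : (0:ℂ) ∉ Ω) (htouch : (0:ℂ) ∈ closure Ω)
    (p q : ℂ → ℂ) (hp : DifferentiableOn ℂ p Ω) (hq : DifferentiableOn ℂ q Ω)
    (hpz : ∀ z ∈ Ω, p z ≠ 0)
    (b : ℂ)
    (F : ℂ → ℂ) (hF : ∀ z ∈ Ω, HasDerivAt F (q z / p z) z)
    (τ δ C : ℝ) (hτ : 0 < τ) (hδ : 0 < δ)
    (hbound : ∀ z ∈ Ω, ‖z‖ < δ → ‖q z / p z + (τ : ℂ) / z‖ < C) :
    Filter.Tendsto (fun z => Complex.exp (-(F z - F b))) (nhdsWithin 0 Ω) (nhds 0) ∧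
    ∀ a ∈ Ω, Filter.Tendsto
      (fun ε : ℝ => ∫ t in ε..1,
        q ((t : ℂ) * a) * ((p ((t : ℂ) * a))⁻¹ * Complex.exp (-(F ((t : ℂ) * a) - F b))) * a)
      (nhdsWithin 0 (Set.Ioi 0))
      (nhds (-(p a) * ((p a)⁻¹ * Complex.exp (-(F a - F b))))) := by
  have hΩc : IsPreconnected Ω := isPreconnected_iff_preconnectedSpace.mpr inferInstance
  have hlim := tendsto_exp_neg_sub_nhdsWithin_zero hΩ hΩc hstar h0 htouch hF hτ hδ hbound b
  refine ⟨hlim, fun a ha => ?_⟩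
  have hG : ∀ z ∈ Ω, HasDerivAt (fun z => -exp (-(F z - F b)))
      (q z * ((p z)⁻¹ * exp (-(F z - F b)))) z := fun z hz =>
    ((hF z hz).sub_const (F b)).neg.cexp.neg.congr_deriv
      (by simp only [Pi.neg_apply, div_eq_mul_inv]; ring)
  have hFc : ContinuousOn F Ω := fun z hz => (hF z hz).continuousAt.continuousWithinAt
  have hg : ContinuousOn (fun z => q z * ((p z)⁻¹ * exp (-(F z - F b)))) Ω :=
    hq.continuousOn.mul ((hp.continuousOn.inv₀ hpz).mul (hFc.sub continuousOn_const).neg.cexp)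
  convert tendsto_integral_ray hstar hG hg (by simpa using hlim.neg) ha using 2
  field_simp [hpz a ha]

/-- Construction of the prototype solution.  `Ω` is simply connected, star-shaped
around `0`, does not contain `0` but touches it; `p, q` are holomorphic with `p`
nonvanishing; `F` is a primitive of `q/p` on `Ω`, so that `∫_b^a q/p = F a - F b` and
`f₀ a = (1/p a) · exp(-(F a - F b))`.  Under the regular singularity bound
`|q/p + τ/ζ| < C` near `0` (with `τ > 0`), the factor `exp(-(F ζ - F b))` tends to `0`
as `ζ → 0` in `Ω`, and `f₀` satisfies `f₀ a = -(1/p a) ∫_{ζ=0}^a q f₀ dζ`, the improper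
integral being taken along the radial path, i.e. the limit as `ε → 0⁺` of
`∫_ε^1 q(ta) f₀(ta) a dt` equals `-(p a) f₀ a`. -/
theorem stmt4 (Ω : Set ℂ) (hΩ : IsOpen Ω) (hsc : SimplyConnectedSpace Ω)
    (hstar : ∀ a ∈ Ω, ∀ t : ℝ, t ∈ Set.Ioc (0:ℝ) 1 → (t : ℂ) * a ∈ Ω)
    (h0 : (0:ℂ) ∉ Ω) (htouch : (0:ℂ) ∈ closure Ω)
    (p q : ℂ → ℂ) (hp : DifferentiableOn ℂ p Ω) (hq : DifferentiableOn ℂ q Ω)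
    (hpz : ∀ z ∈ Ω, p z ≠ 0)
    (b : ℂ) (hb : b ∈ Ω)
    (F : ℂ → ℂ) (hF : ∀ z ∈ Ω, HasDerivAt F (q z / p z) z)
    (τ δ C : ℝ) (hτ : 0 < τ) (hδ : 0 < δ)
    (hbound : ∀ z ∈ Ω, ‖z‖ < δ → ‖q z / p z + (τ : ℂ) / z‖ < C) :
    Filter.Tendsto (fun z => Complex.exp (-(F z - F b))) (nhdsWithin 0 Ω) (nhds 0) ∧
    ∀ a ∈ Ω, Filter.Tendsto
      (fun ε : ℝ => ∫ t in ε..1,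
        q ((t : ℂ) * a) * ((p ((t : ℂ) * a))⁻¹ * Complex.exp (-(F ((t : ℂ) * a) - F b))) * a)
      (nhdsWithin 0 (Set.Ioi 0))
      (nhds (-(p a) * ((p a)⁻¹ * Complex.exp (-(F a - F b))))) :=
  stmt4_general Ω hΩ hsc hstar h0 htouch p q hp hq hpz b F hF τ δ C hτ hδ hbound
end

section
/- Let Ω ⊂ ℂ be open, star-shaped around 0, 0 ∉ Ω. Fix ν > 0, σ > −1, Λ ≥ 0. If f is holomorphic on Ω with |f(ζ)| ≤ N |ζ|^σ e^{Λ|ζ|} on Ω, then the fractional integral g(a) = (1/Γ(ν)) ∫₀^1 (a − ta)^{ν−1} f(ta) a dt (integrating along the straight segment from 0 to a) satisfies |g(a)| ≤ N (Γ(σ+1)/Γ(σ+ν+1)) |a|^{σ+ν} e^{Λ|a|} for all a ∈ Ω. -/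
/-!
Along the ray `ζ = t a` the hypothesis gives `|f(ta)| ≤ N |a|^σ e^{Λ|a|} t^σ`, while the kernel
contributes `|a|^{ν-1} (1-t)^{ν-1}` and `dζ` a factor `|a|`. Bounding `e^{Λ t |a|} ≤ e^{Λ|a|}`
leaves the Euler integral `∫₀¹ t^σ (1-t)^{ν-1} dt = B(σ+1, ν) = Γ(σ+1) Γ(ν) / Γ(σ+ν+1)`,
and the factor `Γ(ν)` cancels against `1/Γ(ν)`.
-/

open MeasureTheory intervalIntegral Set

lemma ofReal_rpow_mul_one_sub_rpow {u v x : ℝ} (hx : x ∈ Icc (0:ℝ) 1) :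
    (((x ^ (u - 1) * (1 - x) ^ (v - 1) : ℝ)) : ℂ) =
      (x : ℂ) ^ ((u : ℂ) - 1) * (1 - (x : ℂ)) ^ ((v : ℂ) - 1) := by
  push_cast
  rw [Complex.ofReal_cpow hx.1, Complex.ofReal_cpow (sub_nonneg.2 hx.2)]
  push_cast
  ring_nf

lemma intervalIntegrable_rpow_mul_one_sub_rpow {u v : ℝ} (hu : 0 < u) (hv : 0 < v) :
    IntervalIntegrable (fun x : ℝ ↦ x ^ (u - 1) * (1 - x) ^ (v - 1)) volume 0 1 := by
  have h : IntervalIntegrable (fun x : ℝ ↦ ((x ^ (u - 1) * (1 - x) ^ (v - 1) : ℝ) : ℂ))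
      volume 0 1 :=
    (Complex.betaIntegral_convergent (u := u) (v := v) (by simpa) (by simpa)).congr
      fun x hx ↦ (ofReal_rpow_mul_one_sub_rpow
        (Ioc_subset_Icc_self (uIoc_of_le (zero_le_one' ℝ) ▸ hx))).symm
  have h₁ := h.1.re
  have h₂ := h.2.re
  simp only [RCLike.re_to_complex, Complex.ofReal_re] at h₁ h₂
  exact ⟨h₁, h₂⟩

lemma integral_rpow_mul_one_sub_rpow {u v : ℝ} (hu : 0 < u) (hv : 0 < v) :
    ∫ x in (0:ℝ)..1, x ^ (u - 1) * (1 - x) ^ (v - 1) = ProbabilityTheory.beta u v := by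
  have h : EqOn (fun x : ℝ ↦ ((x ^ (u - 1) * (1 - x) ^ (v - 1) : ℝ) : ℂ))
      (fun x : ℝ ↦ (x : ℂ) ^ ((u : ℂ) - 1) * (1 - (x : ℂ)) ^ ((v : ℂ) - 1)) (uIcc 0 1) :=
    fun x hx ↦ ofReal_rpow_mul_one_sub_rpow (uIcc_of_le (zero_le_one' ℝ) ▸ hx)
  rw [ProbabilityTheory.beta_eq_betaIntegralReal u v hu hv, Complex.betaIntegral,
    ← integral_congr h, intervalIntegral.integral_ofReal, Complex.ofReal_re]

lemma norm_sub_ofReal_mul_cpow {a : ℂ} {t : ℝ} (ht : t ≤ 1) (μ : ℝ) :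
    ‖(a - (t : ℂ) * a) ^ (μ : ℂ)‖ = (1 - t) ^ μ * ‖a‖ ^ μ := by
  have h : a - (t : ℂ) * a = ((1 - t : ℝ) : ℂ) * a := by push_cast; ring
  rw [h, Complex.norm_cpow_real, norm_mul, Complex.norm_real,
    Real.norm_of_nonneg (sub_nonneg.2 ht), Real.mul_rpow (sub_nonneg.2 ht) (norm_nonneg a)]

lemma norm_radialIntegrand_le {a w : ℂ} (ha : a ≠ 0) {t ν σ Λ N : ℝ} (ht : t ∈ Ioc (0:ℝ) 1)
    (hΛ : 0 ≤ Λ) (hw : ‖w‖ ≤ N * ‖(t : ℂ) * a‖ ^ σ * Real.exp (Λ * ‖(t : ℂ) * a‖)) :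
    ‖(a - (t : ℂ) * a) ^ ((ν : ℂ) - 1) * w * a‖ ≤
      N * ‖a‖ ^ (σ + ν) * Real.exp (Λ * ‖a‖) * (t ^ σ * (1 - t) ^ (ν - 1)) := by
  obtain ⟨ht₀, ht₁⟩ := ht
  have hna : 0 < ‖a‖ := norm_pos_iff.2 ha
  rw [norm_mul, Complex.norm_real, Real.norm_of_nonneg ht₀.le, Real.mul_rpow ht₀.le hna.le] at hw
  have hN : 0 ≤ N := nonneg_of_mul_nonneg_left
    (nonneg_of_mul_nonneg_left ((norm_nonneg w).trans hw) (Real.exp_pos _)) (by positivity)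
  have hw' : ‖w‖ ≤ N * (t ^ σ * ‖a‖ ^ σ) * Real.exp (Λ * ‖a‖) := by
    refine hw.trans ?_
    gcongr
    nlinarith
  have hkernel : ‖(a - (t : ℂ) * a) ^ ((ν : ℂ) - 1)‖ = (1 - t) ^ (ν - 1) * ‖a‖ ^ (ν - 1) := by
    exact_mod_cast norm_sub_ofReal_mul_cpow ht₁ (ν - 1)
  calc ‖(a - (t : ℂ) * a) ^ ((ν : ℂ) - 1) * w * a‖
      = (1 - t) ^ (ν - 1) * ‖a‖ ^ (ν - 1) * ‖w‖ * ‖a‖ := by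
        rw [norm_mul, norm_mul, hkernel]
    _ ≤ (1 - t) ^ (ν - 1) * ‖a‖ ^ (ν - 1) *
          (N * (t ^ σ * ‖a‖ ^ σ) * Real.exp (Λ * ‖a‖)) * ‖a‖ := by
        have := Real.rpow_nonneg (sub_nonneg.2 ht₁) (ν - 1)
        gcongr
    _ = N * (‖a‖ ^ σ * (‖a‖ ^ (ν - 1) * ‖a‖)) * Real.exp (Λ * ‖a‖) *
          (t ^ σ * (1 - t) ^ (ν - 1)) := by
        ring
    _ = N * ‖a‖ ^ (σ + ν) * Real.exp (Λ * ‖a‖) * (t ^ σ * (1 - t) ^ (ν - 1)) := by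
        rw [← Real.rpow_add_one hna.ne', ← Real.rpow_add hna, sub_add_cancel]

theorem stmt17_general (Ω : Set ℂ)
    (hstar : ∀ a ∈ Ω, ∀ t : ℝ, t ∈ Set.Ioc (0:ℝ) 1 → (t : ℂ) * a ∈ Ω)
    (h0 : (0:ℂ) ∉ Ω)
    (ν σ Λ N : ℝ) (hν : 0 < ν) (hσ : -1 < σ) (hΛ : 0 ≤ Λ)
    (f : ℂ → ℂ)
    (hfb : ∀ z ∈ Ω, ‖f z‖ ≤ N * ‖z‖ ^ σ * Real.exp (Λ * ‖z‖)) :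
    ∀ a ∈ Ω,
      ‖((Real.Gamma ν : ℂ))⁻¹ *
          ∫ t in (0:ℝ)..1, (a - (t : ℂ) * a) ^ ((ν : ℂ) - 1) * f ((t : ℂ) * a) * a‖ ≤
        N * (Real.Gamma (σ + 1) / Real.Gamma (σ + ν + 1)) * ‖a‖ ^ (σ + ν) *
          Real.exp (Λ * ‖a‖) := by
  intro a ha
  have ha0 : a ≠ 0 := fun h ↦ h0 (h ▸ ha)
  have hσ1 : 0 < σ + 1 := by linarith
  set C := N * ‖a‖ ^ (σ + ν) * Real.exp (Λ * ‖a‖) with hC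
  have hbound : ‖∫ t in (0:ℝ)..1, (a - (t : ℂ) * a) ^ ((ν : ℂ) - 1) * f ((t : ℂ) * a) * a‖ ≤
      C * ProbabilityTheory.beta (σ + 1) ν := by
    have hβ := integral_rpow_mul_one_sub_rpow hσ1 hν
    rw [add_sub_cancel_right] at hβ
    rw [← hβ, ← intervalIntegral.integral_const_mul]
    refine norm_integral_le_of_norm_le zero_le_one (ae_of_all _ fun t ht ↦ ?_) ?_
    · exact norm_radialIntegrand_le ha0 ht hΛ (hfb _ (hstar a ha t ht))
    · simpa using (intervalIntegrable_rpow_mul_one_sub_rpow hσ1 hν).const_mul C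
  have hΓ : 0 < Real.Gamma ν := Real.Gamma_pos_of_pos hν
  calc _ = (Real.Gamma ν)⁻¹ * ‖∫ t in (0:ℝ)..1,
        (a - (t : ℂ) * a) ^ ((ν : ℂ) - 1) * f ((t : ℂ) * a) * a‖ := by
        rw [norm_mul, norm_inv, Complex.norm_real, Real.norm_of_nonneg hΓ.le]
    _ ≤ (Real.Gamma ν)⁻¹ * (C * ProbabilityTheory.beta (σ + 1) ν) := by gcongr
    _ = _ := by
        rw [ProbabilityTheory.beta, add_right_comm, hC]
        field_simp

/-- Smoothing effect of the Riemann–Liouville fractional integral of order `ν > 0`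
with base point `0`, along the radial segment: if `|f(ζ)| ≤ N|ζ|^σ e^{Λ|ζ|}` with
`σ > -1` and `Λ ≥ 0`, then
`|(1/Γ(ν)) ∫₀¹ (a - ta)^{ν-1} f(ta) a dt| ≤ N (Γ(σ+1)/Γ(σ+ν+1)) |a|^{σ+ν} e^{Λ|a|}`. -/
theorem stmt17 (Ω : Set ℂ) (hΩ : IsOpen Ω)
    (hstar : ∀ a ∈ Ω, ∀ t : ℝ, t ∈ Set.Ioc (0:ℝ) 1 → (t : ℂ) * a ∈ Ω)
    (h0 : (0:ℂ) ∉ Ω)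
    (ν σ Λ N : ℝ) (hν : 0 < ν) (hσ : -1 < σ) (hΛ : 0 ≤ Λ) (hN : 0 ≤ N)
    (f : ℂ → ℂ) (hf : DifferentiableOn ℂ f Ω)
    (hfb : ∀ z ∈ Ω, ‖f z‖ ≤ N * ‖z‖ ^ σ * Real.exp (Λ * ‖z‖)) :
    ∀ a ∈ Ω,
      ‖((Real.Gamma ν : ℂ))⁻¹ *
          ∫ t in (0:ℝ)..1, (a - (t : ℂ) * a) ^ ((ν : ℂ) - 1) * f ((t : ℂ) * a) * a‖ ≤
        N * (Real.Gamma (σ + 1) / Real.Gamma (σ + ν + 1)) * ‖a‖ ^ (σ + ν) *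
          Real.exp (Λ * ‖a‖) :=
  stmt17_general Ω hstar h0 ν σ Λ N hν hσ hΛ f hfb
end

section
/- Let Ω ⊂ ℂ be open and star-shaped around 0 with 0 ∉ Ω, and let k : Ω² → ℂ be continuous satisfying |k(a,a')| ≤ σ/|a| whenever |a| < δ and |a'| < δ (for some δ > 0, σ > 0). Fix ρ > σ and Λ ≥ 0. Then for any holomorphic φ on Ω with |φ(ζ)| ≤ N |ζ|^{ρ−1} e^{Λ|ζ|}, the function (Vφ)(a) = ∫₀^1 k(a, ta) φ(ta) a dt satisfies |(Vφ)(a)| ≤ (σ/ρ) N |a|^{ρ−1} e^{Λ|a|} for all a ∈ Ω with |a| < δ. -/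
/-! On the segment `ζ = t a` the integrand is bounded by `σ N |a|^{ρ-1} e^{Λ|a|} t^{ρ-1}`: the
factor `|a|` cancels the `1/|a|` in the kernel bound, `|t a|^{ρ-1} = t^{ρ-1} |a|^{ρ-1}`, and
`e^{Λ t |a|} ≤ e^{Λ |a|}`. Integrating, `∫₀¹ t^{ρ-1} dt = 1/ρ`. -/

open Real intervalIntegral MeasureTheory

lemma norm_integral_zero_one_le_of_norm_le_mul_rpow {E : Type*} [NormedAddCommGroup E]
    [NormedSpace ℝ E] {f : ℝ → E} {C ρ : ℝ} (hρ : 0 < ρ)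
    (hf : ∀ t ∈ Set.Ioc (0:ℝ) 1, ‖f t‖ ≤ C * t ^ (ρ - 1)) :
    ‖∫ t in (0:ℝ)..1, f t‖ ≤ C / ρ :=
  calc ‖∫ t in (0:ℝ)..1, f t‖ ≤ ∫ t in (0:ℝ)..1, C * t ^ (ρ - 1) :=
        norm_integral_le_of_norm_le zero_le_one (ae_of_all _ hf)
          ((intervalIntegrable_rpow' (by linarith)).const_mul C)
    _ = C / ρ := by
        rw [intervalIntegral.integral_const_mul, integral_rpow (Or.inl (by linarith)),
          sub_add_cancel, one_rpow, zero_rpow hρ.ne']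
        ring

lemma mul_rpow_mul_exp_mul_le {N Λ ρ r t : ℝ} (hN : 0 ≤ N) (hΛ : 0 ≤ Λ) (hr : 0 ≤ r)
    (ht : t ∈ Set.Ioc (0:ℝ) 1) :
    N * (t * r) ^ (ρ - 1) * exp (Λ * (t * r)) ≤ t ^ (ρ - 1) * (N * r ^ (ρ - 1) * exp (Λ * r)) := by
  obtain ⟨ht0, ht1⟩ := ht
  have hexp : exp (Λ * (t * r)) ≤ exp (Λ * r) :=
    exp_le_exp.mpr (mul_le_mul_of_nonneg_left (mul_le_of_le_one_left hr ht1) hΛ)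
  rw [mul_rpow ht0.le hr]
  calc N * (t ^ (ρ - 1) * r ^ (ρ - 1)) * exp (Λ * (t * r))
      ≤ N * (t ^ (ρ - 1) * r ^ (ρ - 1)) * exp (Λ * r) := by gcongr
    _ = t ^ (ρ - 1) * (N * r ^ (ρ - 1) * exp (Λ * r)) := by ring

theorem stmt19_general (Ω : Set ℂ)
    (hstar : ∀ a ∈ Ω, ∀ t : ℝ, t ∈ Set.Ioc (0:ℝ) 1 → (t : ℂ) * a ∈ Ω)
    (h0 : (0:ℂ) ∉ Ω)
    (k : ℂ → ℂ → ℂ)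
    (σ ρ δ Λ N : ℝ) (hρ : σ < ρ) (hΛ : 0 ≤ Λ)
    (hkb : ∀ a ∈ Ω, ∀ a' ∈ Ω, ‖a‖ < δ → ‖a'‖ < δ → ‖k a a'‖ ≤ σ / ‖a‖)
    (φ : ℂ → ℂ)
    (hφb : ∀ z ∈ Ω, ‖φ z‖ ≤ N * ‖z‖ ^ (ρ - 1) * Real.exp (Λ * ‖z‖)) :
    ∀ a ∈ Ω, ‖a‖ < δ →
      ‖∫ t in (0:ℝ)..1, k a ((t : ℂ) * a) * φ ((t : ℂ) * a) * a‖ ≤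
        σ / ρ * N * ‖a‖ ^ (ρ - 1) * Real.exp (Λ * ‖a‖) := by
  intro a ha haδ
  have ha0 : 0 < ‖a‖ := norm_pos_iff.mpr fun h ↦ h0 (h ▸ ha)
  -- Both bounds, evaluated at `ζ = a`, force the signs of `σ` and `N`.
  have hσ : 0 ≤ σ := by
    have := (norm_nonneg _).trans (hkb a ha a ha haδ haδ)
    rwa [le_div_iff₀ ha0, zero_mul] at this
  have hN : 0 ≤ N := by
    have := (norm_nonneg _).trans (hφb a ha)
    exact nonneg_of_mul_nonneg_left (nonneg_of_mul_nonneg_left this (exp_pos _))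
      (rpow_pos_of_pos ha0 _)
  refine (norm_integral_zero_one_le_of_norm_le_mul_rpow (hσ.trans_lt hρ)
    (C := σ * (N * ‖a‖ ^ (ρ - 1) * exp (Λ * ‖a‖))) fun t ht ↦ ?_).trans_eq (by ring)
  have hta : (t : ℂ) * a ∈ Ω := hstar a ha t ht
  have hnorm : ‖(t : ℂ) * a‖ = t * ‖a‖ := by
    rw [norm_mul, Complex.norm_real, norm_of_nonneg ht.1.le]
  have htaδ : ‖(t : ℂ) * a‖ < δ := hnorm ▸ (mul_le_of_le_one_left ha0.le ht.2).trans_lt haδ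
  calc ‖k a ((t : ℂ) * a) * φ ((t : ℂ) * a) * a‖
      = ‖k a ((t : ℂ) * a)‖ * ‖φ ((t : ℂ) * a)‖ * ‖a‖ := by rw [norm_mul, norm_mul]
    _ ≤ σ / ‖a‖ * (t ^ (ρ - 1) * (N * ‖a‖ ^ (ρ - 1) * exp (Λ * ‖a‖))) * ‖a‖ := by
        gcongr
        · exact hkb a ha _ hta haδ htaδ
        · exact (hnorm ▸ hφb _ hta).trans (mul_rpow_mul_exp_mul_le hN hΛ ha0.le ht)
    _ = σ * (N * ‖a‖ ^ (ρ - 1) * exp (Λ * ‖a‖)) * t ^ (ρ - 1) := by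
        field_simp

/-- Contraction estimate near the origin: if `|k(a,a')| ≤ σ/|a|` for `|a|, |a'| < δ`,
and `|φ(ζ)| ≤ N|ζ|^{ρ-1} e^{Λ|ζ|}` with `ρ > σ > 0` and `Λ ≥ 0`, then the radial
Volterra integral satisfies `|(Vφ)(a)| ≤ (σ/ρ) N |a|^{ρ-1} e^{Λ|a|}` for `|a| < δ`. -/
theorem stmt19 (Ω : Set ℂ) (hΩ : IsOpen Ω)
    (hstar : ∀ a ∈ Ω, ∀ t : ℝ, t ∈ Set.Ioc (0:ℝ) 1 → (t : ℂ) * a ∈ Ω)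
    (h0 : (0:ℂ) ∉ Ω)
    (k : ℂ → ℂ → ℂ) (hk : ContinuousOn (fun z : ℂ × ℂ => k z.1 z.2) (Ω ×ˢ Ω))
    (σ ρ δ Λ N : ℝ) (hσ : 0 < σ) (hρ : σ < ρ) (hδ : 0 < δ) (hΛ : 0 ≤ Λ) (hN : 0 ≤ N)
    (hkb : ∀ a ∈ Ω, ∀ a' ∈ Ω, ‖a‖ < δ → ‖a'‖ < δ → ‖k a a'‖ ≤ σ / ‖a‖)
    (φ : ℂ → ℂ) (hφ : DifferentiableOn ℂ φ Ω)
    (hφb : ∀ z ∈ Ω, ‖φ z‖ ≤ N * ‖z‖ ^ (ρ - 1) * Real.exp (Λ * ‖z‖)) :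
    ∀ a ∈ Ω, ‖a‖ < δ →
      ‖∫ t in (0:ℝ)..1, k a ((t : ℂ) * a) * φ ((t : ℂ) * a) * a‖ ≤
        σ / ρ * N * ‖a‖ ^ (ρ - 1) * Real.exp (Λ * ‖a‖) :=
  stmt19_general Ω hstar h0 k σ ρ δ Λ N hρ hΛ hkb φ hφb
end
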